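/- arXiv:1003.4942 — 7 statements merged into one kernel-verified Lean document; each statement's English description precedes it below -/
import Mathlib

section
/- OPT_n = C + min over all functions F : {1, …, n} → ℝ of [ ∑_{i=1}^{n} (P_i − F_i)² + C · |{ i ∈ {1, …, n−1} : F_i ≠ F_{i+1} }| ]. In particular, the dynamic programming recurrence solves the piecewise-constant signal approximation problem up to an additive constant C. -/
/-!
Call the cost of a fit `F` on a window `(j, i]` its squared error there plus `C` for every
segment starting in the window; the objective plus `C` is the cost on `(0, n]`. Cutting a fit at
the start `j` of its last segment, its cost is the cost on `(0, j]` plus the squared error of a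
constant on `(j, i]`, which the mean minimises, plus `C`; by induction this bounds it below by
`OPT i`. Conversely, gluing an optimal fit on `(0, j]` to the mean on `(j, i]` costs at most
`OPT j + error + C` (exactly that unless the two happen to agree at `j`, which `C ≥ 0` covers).
-/

open Finset

theorem Finset.sum_sq_sub_mean_le {ι : Type*} (s : Finset ι) (f : ι → ℝ) (c : ℝ) :
    ∑ i ∈ s, (f i - (∑ j ∈ s, f j) / #s) ^ 2 ≤ ∑ i ∈ s, (f i - c) ^ 2 := by
  rcases s.eq_empty_or_nonempty with rfl | hs
  · simp
  set μ := (∑ j ∈ s, f j) / #s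
  have hsum : ∑ j ∈ s, f j = #s * μ := by
    have : (#s : ℝ) ≠ 0 := by exact_mod_cast hs.card_ne_zero
    simp only [μ]; field_simp
  -- the cross term vanishes because `μ` is the mean
  have hsplit : ∑ i ∈ s, (f i - c) ^ 2 = ∑ i ∈ s, (f i - μ) ^ 2 + #s * (μ - c) ^ 2 := by
    have h : ∀ i ∈ s, (f i - c) ^ 2 = (f i - μ) ^ 2 + 2 * (μ - c) * f i + (c ^ 2 - μ ^ 2) :=
      fun i _ => by ring
    rw [sum_congr rfl h, sum_add_distrib, sum_add_distrib, ← mul_sum, hsum, sum_const,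
      nsmul_eq_mul]
    ring
  rw [hsplit]
  exact le_add_of_nonneg_right (mul_nonneg (Nat.cast_nonneg _) (sq_nonneg _))

section SegmentedFit

variable (P : ℕ → ℝ) (C : ℝ)

/-- A segment of `F` starts after `k` when `k = 0` or `F` jumps at `k`; each start in `[j, i)`
costs `C`. -/
noncomputable def fitCost (F : ℕ → ℝ) (j i : ℕ) : ℝ :=
  ∑ k ∈ Ioc j i, (P k - F k) ^ 2 + C * #{k ∈ Ico j i | k = 0 ∨ F k ≠ F (k + 1)}

noncomputable def meanSqErr (j i : ℕ) : ℝ :=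
  ∑ k ∈ Ioc j i, (P k - (∑ m ∈ Ioc j i, P m) / #(Ioc j i)) ^ 2

variable {P C}

theorem fitCost_add {F : ℕ → ℝ} {j i l : ℕ} (hji : j ≤ i) (hil : i ≤ l) :
    fitCost P C F j i + fitCost P C F i l = fitCost P C F j l := by
  rw [fitCost, fitCost, fitCost, card_filter, card_filter, card_filter,
    ← sum_Ioc_consecutive _ hji hil, ← sum_Ico_consecutive _ hji hil]
  push_cast
  ring

theorem fitCost_congr {F G : ℕ → ℝ} {j i : ℕ} (h : ∀ k ∈ Icc j i, F k = G k) :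
    fitCost P C F j i = fitCost P C G j i := by
  have hsq : ∀ k ∈ Ioc j i, (P k - F k) ^ 2 = (P k - G k) ^ 2 := fun k hk => by
    rw [h k (Ioc_subset_Icc_self hk)]
  have hstart :
      ∀ k ∈ Ico j i, (k = 0 ∨ F k ≠ F (k + 1)) ↔ (k = 0 ∨ G k ≠ G (k + 1)) :=
    fun k hk => by
      rw [mem_Ico] at hk
      rw [h k (mem_Icc.2 ⟨hk.1, hk.2.le⟩), h (k + 1) (mem_Icc.2 ⟨by omega, hk.2⟩)]
  rw [fitCost, fitCost, sum_congr rfl hsq, filter_congr hstart]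

theorem eq_of_forall_mem_Ioo_eq_succ {F : ℕ → ℝ} {j i : ℕ}
    (h : ∀ k ∈ Ioo j i, F k = F (k + 1)) : ∀ k ∈ Ioc j i, F k = F i := by
  induction i with
  | zero => simp
  | succ i ih =>
    intro k hk
    rw [mem_Ioc] at hk
    rcases hk.2.eq_or_lt with rfl | hki
    · rfl
    · have hji : j < i := by omega
      rw [ih (fun m hm => h m (Ioo_subset_Ioo_right i.le_succ hm)) k
          (mem_Ioc.2 ⟨hk.1, by omega⟩),
        h i (mem_Ioo.2 ⟨hji, i.lt_succ_self⟩)]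

theorem segmentStarts_subset_singleton {F : ℕ → ℝ} {j i : ℕ}
    (h : ∀ k ∈ Ioo j i, F k = F (k + 1)) :
    {k ∈ Ico j i | k = 0 ∨ F k ≠ F (k + 1)} ⊆ {j} := by
  intro k hk
  rw [mem_filter, mem_Ico] at hk
  rw [mem_singleton]
  by_contra hkj
  have hk' : k ∈ Ioo j i := mem_Ioo.2 ⟨by omega, hk.1.2⟩
  exact hk.2.elim (fun hk0 => by omega) (fun hne => hne (h k hk'))

theorem exists_meanSqErr_add_le_fitCost (F : ℕ → ℝ) {i : ℕ} (hi : 0 < i) :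
    ∃ j < i, meanSqErr P j i + C ≤ fitCost P C F j i := by
  set T := {k ∈ range i | k = 0 ∨ F k ≠ F (k + 1)}
  have hT : T.Nonempty := ⟨0, mem_filter.2 ⟨mem_range.2 hi, Or.inl rfl⟩⟩
  -- cut at the start of the last segment
  set j := T.max' hT
  obtain ⟨hji, hj_start⟩ := mem_filter.1 (T.max'_mem hT)
  rw [mem_range] at hji
  have hconst : ∀ k ∈ Ioo j i, F k = F (k + 1) := by
    intro k hk
    rw [mem_Ioo] at hk
    by_contra hne
    have := T.le_max' k (mem_filter.2 ⟨mem_range.2 hk.2, Or.inr hne⟩)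
    omega
  have hstarts : {k ∈ Ico j i | k = 0 ∨ F k ≠ F (k + 1)} = {j} :=
    (segmentStarts_subset_singleton hconst).antisymm
      (singleton_subset_iff.2 (mem_filter.2 ⟨mem_Ico.2 ⟨le_rfl, hji⟩, hj_start⟩))
  refine ⟨j, hji, ?_⟩
  rw [fitCost, hstarts, card_singleton, Nat.cast_one, mul_one,
    sum_congr rfl fun k hk => by rw [eq_of_forall_mem_Ioo_eq_succ hconst k hk]]
  exact add_le_add (sum_sq_sub_mean_le _ _ _) le_rfl

theorem fitCost_ite_le (hC : 0 ≤ C) (G : ℕ → ℝ) (c : ℝ) (j i : ℕ) :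
    fitCost P C (fun k => if k ≤ j then G k else c) j i
      ≤ ∑ k ∈ Ioc j i, (P k - c) ^ 2 + C := by
  have hc : ∀ k, j < k → (if k ≤ j then G k else c) = c := fun k hk => if_neg (by omega)
  have hstarts := segmentStarts_subset_singleton (F := fun k => if k ≤ j then G k else c) (i := i)
    fun k hk => by rw [hc k (mem_Ioo.1 hk).1, hc (k + 1) (by have := (mem_Ioo.1 hk).1; omega)]
  have hcard : (#{k ∈ Ico j i | k = 0 ∨
      (if k ≤ j then G k else c) ≠ if k + 1 ≤ j then G (k + 1) else c} : ℝ) ≤ 1 := by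
    exact_mod_cast (card_le_card hstarts).trans_eq (card_singleton j)
  rw [fitCost, sum_congr rfl fun k hk => by rw [hc k (mem_Ioc.1 hk).1]]
  exact add_le_add le_rfl (mul_le_of_le_one_right hC hcard)

theorem isLeast_fitCost (hC : 0 ≤ C) {OPT : ℕ → ℝ} {n : ℕ} (h0 : OPT 0 = 0)
    (hrec : ∀ i (hi : 0 < i), i ≤ n → OPT i =
      (range i).inf' (nonempty_range_iff.2 hi.ne') (fun j => OPT j + meanSqErr P j i) + C) :
    ∀ i ≤ n, IsLeast (Set.range fun F => fitCost P C F 0 i) (OPT i) := by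
  intro i
  induction i using Nat.strong_induction_on with | _ i ih =>
  intro hin
  rcases i.eq_zero_or_pos with rfl | hi
  · exact ⟨⟨0, by simp [fitCost, h0]⟩, by rintro _ ⟨F, rfl⟩; simp [fitCost, h0]⟩
  have lower : OPT i ∈ lowerBounds (Set.range fun F => fitCost P C F 0 i) := by
    rintro _ ⟨F, rfl⟩
    obtain ⟨j, hji, hj⟩ := exists_meanSqErr_add_le_fitCost (C := C) (P := P) F hi
    calc OPT i ≤ OPT j + meanSqErr P j i + C := by
          rw [hrec i hi hin]; gcongr; exact inf'_le _ (mem_range.2 hji)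
      _ ≤ fitCost P C F 0 j + fitCost P C F j i := by
          rw [add_assoc]; exact add_le_add ((ih j hji (by omega)).2 ⟨F, rfl⟩) hj
      _ = fitCost P C F 0 i := fitCost_add (Nat.zero_le _) hji.le
  obtain ⟨j, hj, hjmin⟩ := exists_mem_eq_inf' (nonempty_range_iff.2 hi.ne')
    (fun j => OPT j + meanSqErr P j i)
  rw [mem_range] at hj
  obtain ⟨G, hG : fitCost P C G 0 j = OPT j⟩ := (ih j hj (by omega)).1
  set F := fun k => if k ≤ j then G k else (∑ m ∈ Ioc j i, P m) / #(Ioc j i)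
  refine ⟨⟨F, le_antisymm ?_ (lower ⟨F, rfl⟩)⟩, lower⟩
  calc fitCost P C F 0 i = fitCost P C F 0 j + fitCost P C F j i :=
        (fitCost_add (Nat.zero_le _) hj.le).symm
    _ ≤ fitCost P C G 0 j + (meanSqErr P j i + C) := by
        rw [fitCost_congr fun k hk => if_pos (mem_Icc.1 hk).2]
        exact add_le_add le_rfl (fitCost_ite_le hC G _ j i)
    _ = OPT i := by rw [hG, hrec i hi hin, hjmin]; ring

theorem fitCost_zero_left (F : ℕ → ℝ) {n : ℕ} (hn : 1 ≤ n) :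
    fitCost P C F 0 n = ∑ i ∈ Icc 1 n, (P i - F i) ^ 2
      + C * #{i ∈ Icc 1 (n - 1) | F i ≠ F (i + 1)} + C := by
  have hstarts : #{k ∈ Ico 0 n | k = 0 ∨ F k ≠ F (k + 1)}
      = #{i ∈ Icc 1 (n - 1) | F i ≠ F (i + 1)} + 1 := by
    rw [card_filter, card_filter, sum_eq_sum_Ico_succ_bot hn, if_pos (Or.inl rfl), add_comm,
      ← Ico_add_one_right_eq_Icc, Nat.sub_add_cancel hn]
    congr 1
    exact sum_congr rfl fun k hk => by
      rw [mem_Ico] at hk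
      simp only [show k ≠ 0 by omega, false_or]
  rw [fitCost, hstarts, ← Icc_add_one_left_eq_Ioc, zero_add]
  push_cast
  ring

end SegmentedFit

/-- `OPT n = C +` the minimum over all functions `F : {1,…,n} → ℝ` of
`∑_{i=1}^{n} (P i − F i)² + C · |{ i ∈ {1,…,n−1} : F i ≠ F (i+1) }|`, i.e. `OPT n − C`
is the least element of the set of achievable objective values. -/
theorem stmt1 (n : ℕ) (hn : 1 ≤ n) (P : ℕ → ℝ) (C : ℝ) (hC : 0 ≤ C)
    (S : ℕ → ℝ) (hS : ∀ i, S i = ∑ m ∈ Finset.Icc 1 i, P m)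
    (OPT : ℕ → ℝ) (hOPT0 : OPT 0 = 0)
    (hOPT : ∀ i, ∀ hi : 1 ≤ i, i ≤ n →
      OPT i = (Finset.range i).inf' (Finset.nonempty_range_iff.mpr (by omega))
        (fun j => OPT j
          + ∑ k ∈ Finset.Icc (j + 1) i, (P k - (S i - S j) / ((i : ℝ) - j)) ^ 2) + C) :
    IsLeast {v : ℝ | ∃ F : ℕ → ℝ,
        v = ∑ i ∈ Finset.Icc 1 n, (P i - F i) ^ 2
          + C * (((Finset.Icc 1 (n - 1)).filter (fun i => F i ≠ F (i + 1))).card : ℝ)}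
      (OPT n - C) := by
  have hmean : ∀ j i, j ≤ i →
      (S i - S j) / ((i : ℝ) - j) = (∑ m ∈ Ioc j i, P m) / #(Ioc j i) := by
    intro j i hji
    rw [hS, hS, ← zero_add 1, Icc_add_one_left_eq_Ioc, Icc_add_one_left_eq_Ioc,
      ← sum_Ioc_consecutive _ (Nat.zero_le j) hji, Nat.card_Ioc, Nat.cast_sub hji,
      add_sub_cancel_left]
  have hrec : ∀ i (hi : 0 < i), i ≤ n → OPT i =
      (range i).inf' (nonempty_range_iff.2 hi.ne') (fun j => OPT j + meanSqErr P j i) + C := by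
    intro i hi hin
    rw [hOPT i hi hin]
    congr 1
    exact inf'_congr _ rfl fun j hj => by
      rw [meanSqErr, Icc_add_one_left_eq_Ioc, hmean j i (mem_range.1 hj).le]
  obtain ⟨⟨F, hF : fitCost P C F 0 n = OPT n⟩, hlower⟩ :=
    isLeast_fitCost hC hOPT0 hrec n le_rfl
  refine ⟨⟨F, ?_⟩, ?_⟩
  · rw [← hF, fitCost_zero_left F hn]
    ring
  · rintro _ ⟨F, rfl⟩
    have : OPT n ≤ fitCost P C F 0 n := hlower ⟨F, rfl⟩
    rw [fitCost_zero_left F hn] at this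
    linarith
end

section
/- The final approximate value satisfies |DP_n − D̃P_n| ≤ ε. -/
/-! Taking `inf'` over the same index set is 1-Lipschitz for the sup distance, so the exact and the
approximate recurrence drift apart by at most `ε / n` per step, hence by at most `ε` after `n` steps. -/

open Finset

theorem Finset.abs_inf'_sub_inf'_le {ι α : Type*} [AddCommGroup α] [LinearOrder α]
    [IsOrderedAddMonoid α] {s : Finset ι} (hs : s.Nonempty) {f g : ι → α} {δ : α}
    (hfg : ∀ x ∈ s, |f x - g x| ≤ δ) : |s.inf' hs f - s.inf' hs g| ≤ δ := by
  rw [abs_sub_le_iff, sub_le_comm, sub_le_comm (a := s.inf' hs g)]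
  constructor <;> refine le_inf' hs _ fun x hx => ?_
  · exact (sub_le_sub_right (inf'_le f hx) δ).trans
      (sub_le_comm.mp (abs_sub_le_iff.mp (hfg x hx)).1)
  · exact (sub_le_sub_right (inf'_le g hx) δ).trans
      (sub_le_comm.mp (abs_sub_le_iff.mp (hfg x hx)).2)

theorem abs_sub_le_mul_of_approx_inf'_recurrence {n : ℕ} {w : ℕ → ℕ → ℝ} {f g : ℕ → ℝ} {δ : ℝ}
    (hδ : 0 ≤ δ) (h0 : f 0 = g 0)
    (hf : ∀ i, ∀ hi : 1 ≤ i, i ≤ n →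
      f i = (range i).inf' ⟨0, mem_range.mpr hi⟩ (fun j => f j + w j i))
    (hg : ∀ i, ∀ hi : 1 ≤ i, i ≤ n →
      |(range i).inf' ⟨0, mem_range.mpr hi⟩ (fun j => g j + w j i) - g i| ≤ δ) :
    ∀ i ≤ n, |f i - g i| ≤ i * δ := by
  intro i
  induction i using Nat.strong_induction_on with
  | _ i ih =>
    intro hin
    obtain rfl | hi := Nat.eq_zero_or_pos i
    · simp [h0]
    have hs : (range i).Nonempty := ⟨0, mem_range.mpr hi⟩
    have hprev : |(range i).inf' hs (fun j => f j + w j i)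
        - (range i).inf' hs (fun j => g j + w j i)| ≤ (i - 1 : ℝ) * δ := by
      refine abs_inf'_sub_inf'_le hs fun j hj => ?_
      have hji : j < i := mem_range.mp hj
      have hj1 : (j : ℝ) ≤ i - 1 := by
        rw [le_sub_iff_add_le]; exact_mod_cast hji
      rw [add_sub_add_right_eq_sub]
      exact (ih j hji (by omega)).trans (mul_le_mul_of_nonneg_right hj1 hδ)
    calc |f i - g i|
        ≤ |f i - (range i).inf' hs (fun j => g j + w j i)|
          + |(range i).inf' hs (fun j => g j + w j i) - g i| := abs_sub_le _ _ _
      _ ≤ (i - 1 : ℝ) * δ + δ := by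
        rw [hf i hi hin]; exact add_le_add hprev (hg i hi hin)
      _ = i * δ := by ring

theorem stmt4 (n : ℕ) (ε : ℝ) (hε : 0 < ε)
    (wt : ℕ → ℕ → ℝ)
    (DP : ℕ → ℝ) (hDP0 : DP 0 = 0)
    (hDP : ∀ i, ∀ hi : 1 ≤ i, i ≤ n →
      DP i = (Finset.range i).inf' (Finset.nonempty_range_iff.mpr (by omega))
        (fun j => DP j + wt j i))
    (DPt : ℕ → ℝ) (hDPt0 : DPt 0 = 0)
    (hDPt : ∀ i, ∀ hi : 1 ≤ i, i ≤ n →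
      |(Finset.range i).inf' (Finset.nonempty_range_iff.mpr (by omega))
          (fun j => DPt j + wt j i) - DPt i| ≤ ε / n) :
    |DP n - DPt n| ≤ ε := by
  have hstep : 0 ≤ ε / n := by positivity
  calc |DP n - DPt n|
      ≤ n * (ε / n) :=
        abs_sub_le_mul_of_approx_inf'_recurrence hstep (hDP0.trans hDPt0.symm) hDP hDPt n le_rfl
    _ ≤ ε := by
        obtain rfl | hn := Nat.eq_zero_or_pos n
        · simpa using hε.le
        · rw [mul_div_cancel₀ _ (by positivity)]
end

section
/- For all integers 0 ≤ j < i ≤ n, all real numbers x, and all real numbers D_j, the inequality x ≥ D_j − (S_i − S_j)²/(i − j) holds if and only if x·i + S_i² ≥ x·j + D_j·i + 2·S_i·S_j − S_j² − D_j·j. Consequently, deciding whether there exists j < i with x ≥ D_j − (S_i − S_j)²/(i − j) is equivalent to deciding whether the 4-dimensional halfspace { y ∈ ℝ⁴ : (x, i, S_i, −1)·y ≤ x·i + S_i² } contains one of the points (j, D_j, 2·S_j, S_j² + j·D_j). -/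
/-- The right-hand side is linear in `x` and `D`, which makes the test a halfspace query. -/
theorem sub_sq_div_sub_le_iff {K : Type*} [Field K] [LinearOrder K] [IsStrictOrderedRing K]
    {i j : K} (hji : j < i) (x D a b : K) :
    D - (a - b) ^ 2 / (i - j) ≤ x ↔ x * j + D * i + 2 * a * b - b ^ 2 - D * j ≤ x * i + a ^ 2 := by
  rw [sub_le_comm, le_div_iff₀ (sub_pos.2 hji)]
  constructor <;> intro h <;> linear_combination h

theorem dotProduct_threshold_point {R : Type*} [CommRing R] (x i a j D b : R) :
    ![x, i, a, -1] ⬝ᵥ ![j, D, 2 * b, b ^ 2 + j * D] = x * j + D * i + 2 * a * b - b ^ 2 - D * j := by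
  simp only [dotProduct, Fin.sum_univ_four, Matrix.cons_val_zero, Matrix.cons_val_one,
    Matrix.cons_val]
  ring

theorem stmt5_general (S : ℕ → ℝ) (i : ℕ) :
    (∀ j : ℕ, j < i → ∀ x Dj : ℝ,
      (x ≥ Dj - (S i - S j) ^ 2 / ((i : ℝ) - j) ↔
        x * i + (S i) ^ 2 ≥ x * j + Dj * i + 2 * S i * S j - (S j) ^ 2 - Dj * j)) ∧
    (∀ D : ℕ → ℝ, ∀ x : ℝ,
      ((∃ j : ℕ, j < i ∧ x ≥ D j - (S i - S j) ^ 2 / ((i : ℝ) - j)) ↔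
        (∃ j : ℕ, j < i ∧
          dotProduct ![x, (i : ℝ), S i, -1]
            ![(j : ℝ), D j, 2 * S j, (S j) ^ 2 + (j : ℝ) * D j] ≤ x * i + (S i) ^ 2))) := by
  have threshold (j : ℕ) (hj : j < i) (x Dj : ℝ) :=
    sub_sq_div_sub_le_iff (Nat.cast_lt.2 hj : (j : ℝ) < i) x Dj (S i) (S j)
  refine ⟨threshold, fun D x => exists_congr fun j => and_congr_right fun hj => ?_⟩
  rw [dotProduct_threshold_point]
  exact threshold j hj x (D j)

/-- For `0 ≤ j < i ≤ n`, `x ≥ D_j − (S i − S j)²/(i − j)` iff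
`x·i + (S i)² ≥ x·j + D_j·i + 2·S i·S j − (S j)² − D_j·j`; consequently the decision problem
"∃ j < i with x ≥ D j − (S i − S j)²/(i − j)" is equivalent to the 4-dimensional halfspace
`{y : (x, i, S i, −1)·y ≤ x·i + (S i)²}` containing one of the points
`(j, D j, 2·S j, (S j)² + j·D j)`. -/
theorem stmt5 (n : ℕ) (hn : 1 ≤ n) (P : ℕ → ℝ)
    (S : ℕ → ℝ) (hS : ∀ i, S i = ∑ m ∈ Finset.Icc 1 i, P m)
    (i : ℕ) (hin : i ≤ n) :
    (∀ j : ℕ, j < i → ∀ x Dj : ℝ,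
      (x ≥ Dj - (S i - S j) ^ 2 / ((i : ℝ) - j) ↔
        x * i + (S i) ^ 2 ≥ x * j + Dj * i + 2 * S i * S j - (S j) ^ 2 - Dj * j)) ∧
    (∀ D : ℕ → ℝ, ∀ x : ℝ,
      ((∃ j : ℕ, j < i ∧ x ≥ D j - (S i - S j) ^ 2 / ((i : ℝ) - j)) ↔
        (∃ j : ℕ, j < i ∧
          dotProduct ![x, (i : ℝ), S i, -1]
            ![(j : ℝ), D j, 2 * S j, (S j) ^ 2 + (j : ℝ) * D j] ≤ x * i + (S i) ^ 2))) :=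
  stmt5_general S i
end

section
/- The function w' is Monge: for any integers 0 ≤ i₁ < i₂ < i₃ < i₄ ≤ n, w'(i₁, i₄) + w'(i₂, i₃) ≥ w'(i₁, i₃) + w'(i₂, i₄). -/
/-! With `U` the prefix sums of `P²`, the Monge defect
`w'(i₁,i₄) + w'(i₂,i₃) - w'(i₁,i₃) - w'(i₂,i₄)` is, by a ring identity,
`|B|·∑_A P² + |A|·∑_B P² - 2 (∑_A P)(∑_B P)` for the blocks `A = (i₁, i₂]`, `B = (i₃, i₄]`,
which equals `∑_{m ∈ A} ∑_{k ∈ B} (P m - P k)² ≥ 0`. -/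

open Finset

theorem sum_Icc_succ_eq_sub {M : Type*} [AddCommGroup M] (f : ℕ → M) {j i : ℕ} (h : j ≤ i) :
    ∑ m ∈ Icc (j + 1) i, f m = ∑ m ∈ Icc 1 i, f m - ∑ m ∈ Icc 1 j, f m := by
  have split := sum_Ioc_consecutive f j.zero_le h
  simp only [← Icc_add_one_left_eq_Ioc, zero_add] at split
  rw [← split, add_sub_cancel_left]

theorem sum_sum_sub_sq {ι R : Type*} [CommRing R] (s t : Finset ι) (f : ι → R) :
    ∑ m ∈ s, ∑ k ∈ t, (f m - f k) ^ 2
      = #t * ∑ m ∈ s, f m ^ 2 + #s * ∑ k ∈ t, f k ^ 2 - 2 * (∑ m ∈ s, f m) * ∑ k ∈ t, f k := by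
  simp only [sub_sq, sum_add_distrib, sum_sub_distrib, sum_const, nsmul_eq_mul, mul_sum, sum_mul]
  rw [sum_comm (s := t)]
  ring

theorem two_mul_sum_mul_sum_le {ι R : Type*} [CommRing R] [LinearOrder R] [IsStrictOrderedRing R]
    (s t : Finset ι) (f : ι → R) :
    2 * (∑ m ∈ s, f m) * ∑ k ∈ t, f k ≤ #t * ∑ m ∈ s, f m ^ 2 + #s * ∑ k ∈ t, f k ^ 2 := by
  have hnonneg : 0 ≤ ∑ m ∈ s, ∑ k ∈ t, (f m - f k) ^ 2 := by positivity
  rw [sum_sum_sub_sq] at hnonneg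
  linarith

theorem two_mul_sum_Icc_mul_sum_Icc_le (f : ℕ → ℝ) {a b c d : ℕ} (hab : a ≤ b) (hcd : c ≤ d) :
    2 * (∑ m ∈ Icc (a + 1) b, f m) * ∑ m ∈ Icc (c + 1) d, f m
      ≤ ((d : ℝ) - c) * ∑ m ∈ Icc (a + 1) b, f m ^ 2 + ((b : ℝ) - a) * ∑ m ∈ Icc (c + 1) d, f m ^ 2 := by
  simpa only [Icc_add_one_left_eq_Ioc, Nat.card_Ioc, Nat.cast_sub hab, Nat.cast_sub hcd]
    using two_mul_sum_mul_sum_le (Ioc a b) (Ioc c d) f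

theorem stmt8_general (n : ℕ) (P : ℕ → ℝ)
    (S : ℕ → ℝ) (hS : ∀ i, S i = ∑ m ∈ Finset.Icc 1 i, P m)
    (w' : ℕ → ℕ → ℝ)
    (hw' : ∀ j i : ℕ, j < i → i ≤ n →
      w' j i = ((i : ℝ) - j) * ∑ m ∈ Finset.Icc (j + 1) i, (P m) ^ 2 - (S i - S j) ^ 2)
    (i₁ i₂ i₃ i₄ : ℕ) (h12 : i₁ < i₂) (h23 : i₂ < i₃) (h34 : i₃ < i₄) (h4n : i₄ ≤ n) :
    w' i₁ i₃ + w' i₂ i₄ ≤ w' i₁ i₄ + w' i₂ i₃ := by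
  set U : ℕ → ℝ := fun i => ∑ m ∈ Icc 1 i, P m ^ 2
  have hw : ∀ j i, j < i → i ≤ n → w' j i = ((i : ℝ) - j) * (U i - U j) - (S i - S j) ^ 2 :=
    fun j i hji hin => by rw [hw' j i hji hin, sum_Icc_succ_eq_sub _ hji.le]
  have hS_sub : ∀ j i, j ≤ i → ∑ m ∈ Icc (j + 1) i, P m = S i - S j :=
    fun j i h => by rw [hS, hS, sum_Icc_succ_eq_sub _ h]
  have key := two_mul_sum_Icc_mul_sum_Icc_le P h12.le h34.le
  rw [hS_sub _ _ h12.le, hS_sub _ _ h34.le, sum_Icc_succ_eq_sub _ h12.le,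
    sum_Icc_succ_eq_sub _ h34.le] at key
  rw [hw i₁ i₃ (by omega) (by omega), hw i₂ i₄ (by omega) h4n, hw i₁ i₄ (by omega) h4n,
    hw i₂ i₃ h23 (by omega)]
  linear_combination key

/-- The function `w'` is Monge: for `0 ≤ i₁ < i₂ < i₃ < i₄ ≤ n`,
`w'(i₁,i₄) + w'(i₂,i₃) ≥ w'(i₁,i₃) + w'(i₂,i₄)`. -/
theorem stmt8 (n : ℕ) (hn : 1 ≤ n) (P : ℕ → ℝ)
    (S : ℕ → ℝ) (hS : ∀ i, S i = ∑ m ∈ Finset.Icc 1 i, P m)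
    (w' : ℕ → ℕ → ℝ)
    (hw' : ∀ j i : ℕ, j < i → i ≤ n →
      w' j i = ((i : ℝ) - j) * ∑ m ∈ Finset.Icc (j + 1) i, (P m) ^ 2 - (S i - S j) ^ 2)
    (i₁ i₂ i₃ i₄ : ℕ) (h12 : i₁ < i₂) (h23 : i₂ < i₃) (h34 : i₃ < i₄) (h4n : i₄ ≤ n) :
    w' i₁ i₃ + w' i₂ i₄ ≤ w' i₁ i₄ + w' i₂ i₃ :=
  stmt8_general n P S hS w' hw' i₁ i₂ i₃ i₄ h12 h23 h34 h4n
end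

section
/- The weight function w(j, i) = ∑_{m=j+1}^{i} P_m² − (S_i − S_j)²/(i − j) + C does not in general have the Monge property: there exist a positive integer n, a signal P : {1, …, n} → ℝ, a constant C > 0, and indices 0 ≤ i₁ < i₂ < i₃ < i₄ ≤ n such that w(i₁, i₄) + w(i₂, i₃) < w(i₁, i₃) + w(i₂, i₄). -/
/-- The weight function `w(j,i) = ∑_{m=j+1}^{i} (P m)² − (S i − S j)²/(i − j) + C`,
where `S i = ∑_{m=1}^{i} P m`. -/
noncomputable def mongeW (P : ℕ → ℝ) (C : ℝ) (j i : ℕ) : ℝ :=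
  ∑ m ∈ Finset.Icc (j + 1) i, (P m) ^ 2
    - ((∑ m ∈ Finset.Icc 1 i, P m) - ∑ m ∈ Finset.Icc 1 j, P m) ^ 2 / ((i : ℝ) - j)
    + C

/-! For the unit spike `P = Pi.single k 1`, every interval `(j, i]` containing `k` has weight
`w(j, i) = 1 - 1/(i - j) + C`. So for `i₁ < i₂ < k ≤ i₃ < i₄` the Monge inequality
`w(i₁, i₃) + w(i₂, i₄) ≤ w(i₁, i₄) + w(i₂, i₃)` would say
`1/(i₄ - i₁) + 1/(i₃ - i₂) ≤ 1/(i₃ - i₁) + 1/(i₄ - i₂)`, contradicting the strict convexity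
of `x ↦ 1/x`. -/

theorem inv_add_inv_lt_inv_add_inv {d a b : ℝ} (hd : 0 < d) (ha : 0 < a) (hb : 0 < b) :
    (d + a)⁻¹ + (d + b)⁻¹ < d⁻¹ + (d + a + b)⁻¹ := by
  rw [← sub_pos]
  have key : d⁻¹ + (d + a + b)⁻¹ - ((d + a)⁻¹ + (d + b)⁻¹)
      = a * b * (2 * d + a + b) / (d * (d + a) * (d + b) * (d + a + b)) := by
    field_simp
    ring
  rw [key]
  positivity

theorem mongeW_single {k j i : ℕ} (C : ℝ) (hj : j < k) (hi : k ≤ i) :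
    mongeW (Pi.single k 1) C j i = 1 - ((i : ℝ) - j)⁻¹ + C := by
  have sq : ∀ m, (Pi.single k 1 : ℕ → ℝ) m ^ 2 = (Pi.single k 1 : ℕ → ℝ) m := fun m => by
    by_cases h : m = k <;> simp [h]
  simp only [mongeW, sq, Finset.sum_pi_single', Finset.mem_Icc]
  simp [hi, hj.not_ge, show 1 ≤ k by omega, show j + 1 ≤ k by omega, div_eq_mul_inv]

theorem mongeW_single_not_monge {k i₁ i₂ i₃ i₄ : ℕ} (C : ℝ) (h₁₂ : i₁ < i₂) (h₂ : i₂ < k)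
    (h₃ : k ≤ i₃) (h₃₄ : i₃ < i₄) :
    mongeW (Pi.single k 1) C i₁ i₄ + mongeW (Pi.single k 1) C i₂ i₃
      < mongeW (Pi.single k 1) C i₁ i₃ + mongeW (Pi.single k 1) C i₂ i₄ := by
  rw [mongeW_single C (by omega) (by omega), mongeW_single C h₂ h₃,
    mongeW_single C (by omega) h₃, mongeW_single C h₂ (by omega)]
  have := inv_add_inv_lt_inv_add_inv (d := (i₃ : ℝ) - i₂) (a := (i₂ : ℝ) - i₁)
    (b := (i₄ : ℝ) - i₃) (sub_pos.2 (by exact_mod_cast h₂.trans_le h₃))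
    (sub_pos.2 (by exact_mod_cast h₁₂)) (sub_pos.2 (by exact_mod_cast h₃₄))
  ring_nf at this ⊢
  linarith

/-- The weight function `w` does not in general have the Monge property:
there exist `n ≥ 1`, a signal `P`, a constant `C > 0`, and indices
`0 ≤ i₁ < i₂ < i₃ < i₄ ≤ n` with `w(i₁,i₄) + w(i₂,i₃) < w(i₁,i₃) + w(i₂,i₄)`. -/
theorem stmt13 : ∃ (n : ℕ) (P : ℕ → ℝ) (C : ℝ) (i₁ i₂ i₃ i₄ : ℕ),
    1 ≤ n ∧ 0 < C ∧ i₁ < i₂ ∧ i₂ < i₃ ∧ i₃ < i₄ ∧ i₄ ≤ n ∧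
    mongeW P C i₁ i₄ + mongeW P C i₂ i₃ < mongeW P C i₁ i₃ + mongeW P C i₂ i₄ :=
  ⟨4, Pi.single 2 1, 1, 0, 1, 3, 4, by norm_num, one_pos, by norm_num, by norm_num, by norm_num,
    le_rfl, mongeW_single_not_monge 1 (by norm_num) (by norm_num) (by norm_num) (by norm_num)⟩
end

section
/- If |P_{i₁} − P_{i₂}| > 2·√(2C), then in any optimal solution of the piecewise-constant approximation problem, i₁ and i₂ lie in different segments: every F : {1, …, n} → ℝ minimizing ∑_{i=1}^{n} (P_i − F_i)² + C · |{ i ∈ {1, …, n−1} : F_i ≠ F_{i+1} }| satisfies F_m ≠ F_{m+1} for some m with i₁ ≤ m < i₂. -/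
/-!
If `F` had no breakpoint in `[i₁, i₂)`, it would take one value `c` at both `i₁` and `i₂`, and
since `|P i₁ - P i₂| > 2√(2C)` one of `|P i₁ - c|`, `|P i₂ - c|` would exceed `√(2C)`.
Resetting `F` at that index `j` to `P j` lowers the squared error by more than `2C` and creates
at most two new breakpoints (at `j - 1` and `j`), so the cost drops, contradicting optimality.
-/

open Finset Function

namespace PiecewiseConstant

noncomputable def jumps (n : ℕ) (F : ℕ → ℝ) : Finset ℕ :=
  (Icc 1 (n - 1)).filter fun i => F i ≠ F (i + 1)

noncomputable def cost (n : ℕ) (P : ℕ → ℝ) (C : ℝ) (F : ℕ → ℝ) : ℝ :=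
  ∑ i ∈ Icc 1 n, (P i - F i) ^ 2 + C * (jumps n F).card

lemma jumps_update_subset (n j : ℕ) (F : ℕ → ℝ) (x : ℝ) :
    jumps n (update F j x) ⊆ jumps n F ∪ {j - 1, j} := by
  intro i hi
  by_cases hij : i = j - 1 ∨ i = j
  · rcases hij with rfl | rfl <;> simp
  obtain ⟨hij₁, hij₂⟩ := not_or.1 hij
  simp only [jumps, mem_filter] at hi
  rw [update_of_ne hij₂, update_of_ne (by omega)] at hi
  exact mem_union_left _ (mem_filter.2 hi)

lemma card_jumps_update_le (n j : ℕ) (F : ℕ → ℝ) (x : ℝ) :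
    (jumps n (update F j x)).card ≤ (jumps n F).card + 2 :=
  (card_le_card (jumps_update_subset n j F x)).trans <|
    (card_union_le _ _).trans (Nat.add_le_add_left card_le_two _)

lemma sum_sq_sub_update {s : Finset ℕ} {j : ℕ} (hj : j ∈ s) (P F : ℕ → ℝ) :
    ∑ i ∈ s, (P i - update F j (P j) i) ^ 2 = ∑ i ∈ s, (P i - F i) ^ 2 - (P j - F j) ^ 2 := by
  rw [← add_sum_erase _ _ hj, ← add_sum_erase _ (fun i => (P i - F i) ^ 2) hj,
    sum_congr rfl fun i hi => by rw [update_of_ne (ne_of_mem_erase hi)]]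
  simp

lemma cost_update_le {n j : ℕ} (hj : j ∈ Icc 1 n) (P : ℕ → ℝ) {C : ℝ} (hC : 0 ≤ C)
    (F : ℕ → ℝ) : cost n P C (update F j (P j)) ≤ cost n P C F - (P j - F j) ^ 2 + 2 * C := by
  have hcard : ((jumps n (update F j (P j))).card : ℝ) ≤ (jumps n F).card + 2 :=
    mod_cast card_jumps_update_le n j F (P j)
  rw [cost, cost, sum_sq_sub_update hj]
  nlinarith

lemma sq_sub_le_of_forall_cost_le {n j : ℕ} (hj : j ∈ Icc 1 n) {P : ℕ → ℝ} {C : ℝ}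
    (hC : 0 ≤ C) {F : ℕ → ℝ} (hopt : ∀ G, cost n P C F ≤ cost n P C G) :
    (P j - F j) ^ 2 ≤ 2 * C := by
  linarith [hopt (update F j (P j)), cost_update_le hj P hC F]

end PiecewiseConstant

lemma eq_of_forall_eq_succ {α : Type*} {F : ℕ → α} {a b : ℕ} (hab : a ≤ b)
    (h : ∀ m, a ≤ m → m < b → F m = F (m + 1)) : F a = F b := by
  induction b, hab using Nat.le_induction with
  | base => rfl
  | succ b hab ih => exact (ih fun m h₁ h₂ => h m h₁ (by omega)).trans (h b hab (by omega))

open PiecewiseConstant in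
theorem stmt15_general (n : ℕ) (P : ℕ → ℝ) (C : ℝ) (hC : 0 < C)
    (i₁ i₂ : ℕ) (hi₁ : 1 ≤ i₁) (h12 : i₁ < i₂) (hi₂ : i₂ ≤ n)
    (hfar : |P i₁ - P i₂| > 2 * Real.sqrt (2 * C))
    (F : ℕ → ℝ)
    (hopt : ∀ G : ℕ → ℝ,
      ∑ i ∈ Finset.Icc 1 n, (P i - F i) ^ 2
          + C * (((Finset.Icc 1 (n - 1)).filter (fun i => F i ≠ F (i + 1))).card : ℝ)
        ≤ ∑ i ∈ Finset.Icc 1 n, (P i - G i) ^ 2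
          + C * (((Finset.Icc 1 (n - 1)).filter (fun i => G i ≠ G (i + 1))).card : ℝ)) :
    ∃ m : ℕ, i₁ ≤ m ∧ m < i₂ ∧ F m ≠ F (m + 1) := by
  by_contra! hcon
  have hF : F i₁ = F i₂ := eq_of_forall_eq_succ h12.le hcon
  have h₁ : |P i₁ - F i₁| ≤ √(2 * C) :=
    Real.abs_le_sqrt (sq_sub_le_of_forall_cost_le (mem_Icc.2 ⟨hi₁, by omega⟩) hC.le hopt)
  have h₂ : |P i₂ - F i₂| ≤ √(2 * C) :=
    Real.abs_le_sqrt (sq_sub_le_of_forall_cost_le (mem_Icc.2 ⟨by omega, hi₂⟩) hC.le hopt)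
  have htri : |P i₁ - P i₂| ≤ |P i₁ - F i₁| + |P i₂ - F i₂| := by
    rw [hF, abs_sub_comm (P i₂)]
    exact abs_sub_le _ _ _
  linarith

/-- If `|P i₁ − P i₂| > 2·√(2C)`, then in any optimal solution of the
piecewise-constant approximation problem, `i₁` and `i₂` lie in different segments: every
minimizer `F` of `∑_{i=1}^{n} (P i − F i)² + C·|{i ∈ {1,…,n−1} : F i ≠ F (i+1)}|` satisfies
`F m ≠ F (m+1)` for some `i₁ ≤ m < i₂`. -/
theorem stmt15 (n : ℕ) (hn : 1 ≤ n) (P : ℕ → ℝ) (C : ℝ) (hC : 0 < C)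
    (i₁ i₂ : ℕ) (hi₁ : 1 ≤ i₁) (h12 : i₁ < i₂) (hi₂ : i₂ ≤ n)
    (hfar : |P i₁ - P i₂| > 2 * Real.sqrt (2 * C))
    (F : ℕ → ℝ)
    (hopt : ∀ G : ℕ → ℝ,
      ∑ i ∈ Finset.Icc 1 n, (P i - F i) ^ 2
          + C * (((Finset.Icc 1 (n - 1)).filter (fun i => F i ≠ F (i + 1))).card : ℝ)
        ≤ ∑ i ∈ Finset.Icc 1 n, (P i - G i) ^ 2
          + C * (((Finset.Icc 1 (n - 1)).filter (fun i => G i ≠ G (i + 1))).card : ℝ)) :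
    ∃ m : ℕ, i₁ ≤ m ∧ m < i₂ ∧ F m ≠ F (m + 1) :=
  stmt15_general n P C hC i₁ i₂ hi₁ h12 hi₂ hfar F hopt
end

section
/- Splitting a segment that contains two far-apart points strictly decreases the cost: if a segmentation of {1, …, n} contains a segment [i, j] with i ≤ i₁ < i₂ ≤ j and |P_{i₁} − P_{i₂}| > 2·√(2C), where the cost of a segmentation is the sum over its segments [l, r] of min_{x ∈ ℝ} ∑_{m=l}^{r} (P_m − x)² plus C times the number of segments, then replacing [i, j] by the (at most five nonempty) segments [i, i₁−1], [i₁, i₁], [i₁+1, i₂−1], [i₂, i₂], [i₂+1, j] yields a segmentation of strictly smaller cost. -/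
/-!
For every `x`, the sum `∑_{m=i}^{j} (P m - x)²` splits into the sums over the three outer
pieces, each at least that piece's fitting cost, plus `(P i₁ - x)² + (P i₂ - x)²`, which is at
least `(P i₁ - P i₂)² / 2 > 4C`. So splitting lowers the total fitting cost by more than `4C`,
while it adds at most four segments, i.e. at most `4C` of penalty.
-/

/-- A list of segments `(l, r)` (closed intervals `[l, r]`) is a segmentation of `{1, …, n}`
if it is nonempty, starts at `1`, ends at `n`, every segment is nonempty (`l ≤ r`), and
consecutive segments are contiguous. -/
def IsSegmentation (n : ℕ) (L : List (ℕ × ℕ)) : Prop :=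
  L ≠ [] ∧ (L.head?.map Prod.fst = some 1) ∧ (L.getLast?.map Prod.snd = some n) ∧
  (∀ p ∈ L, p.1 ≤ p.2) ∧ L.Chain' (fun p q => q.1 = p.2 + 1)

/-- The fitting cost of a segment `[l, r]`: `min_{x ∈ ℝ} ∑_{m=l}^{r} (P m − x)²`. -/
noncomputable def segFitCost (P : ℕ → ℝ) (l r : ℕ) : ℝ :=
  ⨅ x : ℝ, ∑ m ∈ Finset.Icc l r, (P m - x) ^ 2

/-- The cost of a segmentation: the sum of the fitting costs of its segments plus `C` times
the number of segments. -/
noncomputable def segmentationCost (P : ℕ → ℝ) (C : ℝ) (L : List (ℕ × ℕ)) : ℝ :=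
  (L.map (fun p => segFitCost P p.1 p.2)).sum + C * L.length

open Finset

theorem Finset.sum_Icc_eq_sum_Icc_add_add_sum_Icc {M : Type*} [AddCommMonoid M] (f : ℕ → M)
    {a k b : ℕ} (hk : 0 < k) (hak : a ≤ k) (hkb : k ≤ b) :
    ∑ m ∈ Icc a b, f m = ∑ m ∈ Icc a (k - 1), f m + f k + ∑ m ∈ Icc (k + 1) b, f m := by
  rw [Icc_sub_one_right_eq_Ico_of_not_isMin (by simpa using hk.ne'), ← Ico_add_one_right_eq_Icc,
    ← Ico_add_one_right_eq_Icc, ← sum_Ico_consecutive f hak (by omega : k ≤ b + 1),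
    sum_eq_sum_Ico_succ_bot (by omega : k < b + 1), add_assoc]

theorem segFitCost_le (P : ℕ → ℝ) (l r : ℕ) (x : ℝ) :
    segFitCost P l r ≤ ∑ m ∈ Icc l r, (P m - x) ^ 2 :=
  ciInf_le ⟨0, by rintro _ ⟨y, rfl⟩; positivity⟩ x

theorem segFitCost_nonneg (P : ℕ → ℝ) (l r : ℕ) : 0 ≤ segFitCost P l r :=
  le_ciInf fun _ => by positivity

theorem segFitCost_self (P : ℕ → ℝ) (k : ℕ) : segFitCost P k k = 0 :=
  le_antisymm (by simpa using segFitCost_le P k k (P k)) (segFitCost_nonneg P k k)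

theorem segFitCost_split_add_sq_div_two_le (P : ℕ → ℝ) {i j i₁ i₂ : ℕ} (hi₁ : 0 < i₁)
    (hii₁ : i ≤ i₁) (h12 : i₁ < i₂) (hi₂j : i₂ ≤ j) :
    segFitCost P i (i₁ - 1) + segFitCost P (i₁ + 1) (i₂ - 1) + segFitCost P (i₂ + 1) j +
      (P i₁ - P i₂) ^ 2 / 2 ≤ segFitCost P i j := by
  refine le_ciInf fun x => ?_
  rw [sum_Icc_eq_sum_Icc_add_add_sum_Icc _ hi₁ hii₁ (h12.le.trans hi₂j),
    sum_Icc_eq_sum_Icc_add_add_sum_Icc (k := i₂) _ (by omega) h12 hi₂j]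
  have hpair : (P i₁ - P i₂) ^ 2 / 2 ≤ (P i₁ - x) ^ 2 + (P i₂ - x) ^ 2 := by
    nlinarith [sq_nonneg (P i₁ + P i₂ - 2 * x)]
  linarith [segFitCost_le P i (i₁ - 1) x, segFitCost_le P (i₁ + 1) (i₂ - 1) x,
    segFitCost_le P (i₂ + 1) j x]

theorem segmentationCost_append (P : ℕ → ℝ) (C : ℝ) (L L' : List (ℕ × ℕ)) :
    segmentationCost P C (L ++ L') = segmentationCost P C L + segmentationCost P C L' := by
  simp only [segmentationCost, List.map_append, List.sum_append, List.length_append]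
  push_cast
  ring

def IsSegmentationOn (l r : ℕ) (L : List (ℕ × ℕ)) : Prop :=
  L ≠ [] ∧ L.head?.map Prod.fst = some l ∧ L.getLast?.map Prod.snd = some r ∧
    (∀ p ∈ L, p.1 ≤ p.2) ∧ L.IsChain (fun p q => q.1 = p.2 + 1)

theorem IsSegmentationOn.pos_fst {l r : ℕ} {L : List (ℕ × ℕ)} (h : IsSegmentationOn l r L)
    (hl : 0 < l) {p : ℕ × ℕ} (hp : p ∈ L) : 0 < p.1 := by
  obtain ⟨-, hhead, -, -, hchain⟩ := h
  obtain ⟨s, t, rfl⟩ := List.append_of_mem hp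
  rcases s.eq_nil_or_concat with rfl | ⟨s, x, rfl⟩
  · simp only [List.nil_append, List.head?_cons, Option.map_some, Option.some.injEq] at hhead
    omega
  · have hjoin := (List.isChain_append.mp hchain).2.2 x (by simp) p (by simp)
    omega

theorem IsSegmentationOn.replace {l r a b : ℕ} {L₁ M L₂ : List (ℕ × ℕ)}
    (h : IsSegmentationOn l r (L₁ ++ [(a, b)] ++ L₂)) (hM : IsSegmentationOn a b M) :
    IsSegmentationOn l r (L₁ ++ M ++ L₂) := by
  obtain ⟨-, hhead, hlast, hle, hchain⟩ := h
  obtain ⟨hMne, hMhead, hMlast, hMle, hMchain⟩ := hM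
  obtain ⟨m, hm, hma⟩ := Option.map_eq_some_iff.mp hMhead
  obtain ⟨m', hm', hmb⟩ := Option.map_eq_some_iff.mp hMlast
  have hMhead' : (M ++ L₂).head? = some m := by simp [List.head?_append, hm]
  have hMlast' : (L₁ ++ M).getLast? = some m' := by simp [List.getLast?_append, hm']
  refine ⟨by simp [hMne], ?_, ?_, ?_, ?_⟩
  · rw [List.append_assoc, List.head?_append] at hhead ⊢
    rw [hMhead']
    cases hL₁ : L₁.head? <;> simp_all
  · rw [List.getLast?_append] at hlast ⊢
    rw [hMlast']
    cases hL₂ : L₂.getLast? <;> simp_all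
  · simp only [List.mem_append] at hle ⊢
    rintro p ((hp | hp) | hp)
    exacts [hle p (by simp [hp]), hMle p hp, hle p (by simp [hp])]
  · rw [List.isChain_append, List.isChain_append] at hchain ⊢
    obtain ⟨⟨hL₁, -, hjoin₁⟩, hL₂, hjoin₂⟩ := hchain
    refine ⟨⟨hL₁, hMchain, fun x hx y hy => ?_⟩, hL₂, fun x hx y hy => ?_⟩
    · obtain rfl : m = y := by simpa [hm] using hy
      simpa [hma] using hjoin₁ x hx (a, b) rfl
    · obtain rfl : m' = x := by simpa [hMlast'] using hx
      simpa [hmb] using hjoin₂ (a, b) (by simp) y hy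

abbrev splitSegments (i j i₁ i₂ : ℕ) : List (ℕ × ℕ) :=
  [(i, i₁ - 1), (i₁, i₁), (i₁ + 1, i₂ - 1), (i₂, i₂), (i₂ + 1, j)].filter (fun p => p.1 ≤ p.2)

theorem isSegmentationOn_splitSegments {i j i₁ i₂ : ℕ} (hi₁ : 0 < i₁) (hii₁ : i ≤ i₁)
    (h12 : i₁ < i₂) (hi₂j : i₂ ≤ j) : IsSegmentationOn i j (splitSegments i j i₁ i₂) := by
  refine ⟨?_, ?_, ?_, fun p hp => by simpa using (List.mem_filter.mp hp).2, ?_⟩ <;>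
  by_cases c1 : i ≤ i₁ - 1 <;> by_cases c2 : i₁ + 1 ≤ i₂ - 1 <;> by_cases c3 : i₂ + 1 ≤ j <;>
    simp [c1, c2, c3, List.getLast?, List.isChain_cons_cons] <;> omega

theorem segmentationCost_splitSegments_le (P : ℕ → ℝ) {C : ℝ} (hC : 0 ≤ C) (i j i₁ i₂ : ℕ) :
    segmentationCost P C (splitSegments i j i₁ i₂) ≤
      segFitCost P i (i₁ - 1) + segFitCost P (i₁ + 1) (i₂ - 1) + segFitCost P (i₂ + 1) j +
        5 * C := by
  have hfit : ((splitSegments i j i₁ i₂).map fun p => segFitCost P p.1 p.2).sum ≤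
      segFitCost P i (i₁ - 1) + segFitCost P (i₁ + 1) (i₂ - 1) + segFitCost P (i₂ + 1) j := by
    refine ((List.filter_sublist.map _).sum_le_sum fun _ h => ?_).trans_eq ?_
    · obtain ⟨p, -, rfl⟩ := List.mem_map.mp h
      exact segFitCost_nonneg P p.1 p.2
    · simp [segFitCost_self, add_assoc]
  have hlen : ((splitSegments i j i₁ i₂).length : ℝ) ≤ 5 := by
    exact_mod_cast List.length_filter_le _ _
  unfold segmentationCost
  linarith [mul_le_mul_of_nonneg_left hlen hC]

theorem stmt16_general (n : ℕ) (P : ℕ → ℝ) (C : ℝ) (hC : 0 < C)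
    (L₁ L₂ : List (ℕ × ℕ)) (i j i₁ i₂ : ℕ)
    (hseg : IsSegmentation n (L₁ ++ [(i, j)] ++ L₂))
    (hii₁ : i ≤ i₁) (h12 : i₁ < i₂) (hi₂j : i₂ ≤ j)
    (hfar : |P i₁ - P i₂| > 2 * Real.sqrt (2 * C)) :
    IsSegmentation n
      (L₁ ++ ([(i, i₁ - 1), (i₁, i₁), (i₁ + 1, i₂ - 1), (i₂, i₂), (i₂ + 1, j)].filter
        (fun p => p.1 ≤ p.2)) ++ L₂) ∧
    segmentationCost P C
        (L₁ ++ ([(i, i₁ - 1), (i₁, i₁), (i₁ + 1, i₂ - 1), (i₂, i₂), (i₂ + 1, j)].filter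
          (fun p => p.1 ≤ p.2)) ++ L₂)
      < segmentationCost P C (L₁ ++ [(i, j)] ++ L₂) := by
  have hseg' : IsSegmentationOn 1 n (L₁ ++ [(i, j)] ++ L₂) := hseg
  have hi₁ : 0 < i₁ := (hseg'.pos_fst one_pos (p := (i, j)) (by simp)).trans_le hii₁
  refine ⟨hseg'.replace (isSegmentationOn_splitSegments hi₁ hii₁ h12 hi₂j), ?_⟩
  have hgap : 8 * C < (P i₁ - P i₂) ^ 2 := by
    have h2C : Real.sqrt (2 * C) ^ 2 = 2 * C := Real.sq_sqrt (by positivity)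
    nlinarith [sq_abs (P i₁ - P i₂), Real.sqrt_nonneg (2 * C)]
  have hij : segmentationCost P C [(i, j)] = segFitCost P i j + C := by
    simp [segmentationCost]
  simp only [segmentationCost_append, hij]
  linarith [segFitCost_split_add_sq_div_two_le P hi₁ hii₁ h12 hi₂j,
    segmentationCost_splitSegments_le P hC.le i j i₁ i₂]

/-- Splitting a segment containing two far-apart points strictly decreases the
cost: if a segmentation contains a segment `[i, j]` with `i ≤ i₁ < i₂ ≤ j` and
`|P i₁ − P i₂| > 2·√(2C)`, then replacing `[i, j]` by the (at most five nonempty) segments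
`[i, i₁−1], [i₁, i₁], [i₁+1, i₂−1], [i₂, i₂], [i₂+1, j]` yields a segmentation of strictly
smaller cost. -/
theorem stmt16 (n : ℕ) (hn : 1 ≤ n) (P : ℕ → ℝ) (C : ℝ) (hC : 0 < C)
    (L₁ L₂ : List (ℕ × ℕ)) (i j i₁ i₂ : ℕ)
    (hseg : IsSegmentation n (L₁ ++ [(i, j)] ++ L₂))
    (hii₁ : i ≤ i₁) (h12 : i₁ < i₂) (hi₂j : i₂ ≤ j)
    (hfar : |P i₁ - P i₂| > 2 * Real.sqrt (2 * C)) :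
    IsSegmentation n
      (L₁ ++ ([(i, i₁ - 1), (i₁, i₁), (i₁ + 1, i₂ - 1), (i₂, i₂), (i₂ + 1, j)].filter
        (fun p => p.1 ≤ p.2)) ++ L₂) ∧
    segmentationCost P C
        (L₁ ++ ([(i, i₁ - 1), (i₁, i₁), (i₁ + 1, i₂ - 1), (i₂, i₂), (i₂ + 1, j)].filter
          (fun p => p.1 ≤ p.2)) ++ L₂)
      < segmentationCost P C (L₁ ++ [(i, j)] ++ L₂) :=
  stmt16_general n P C hC L₁ L₂ i j i₁ i₂ hseg hii₁ h12 hi₂j hfar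
end
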